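/- Let a, b be integers with 2 ≤ b < a and suppose the polynomial P(X) = X^3 − aX^2 + bX − 1 has three real roots β, β', β'' with β > 1, 0 < β' < 1 and 0 < β'' < 1. Then L_⊕(β) ≥ 1; more precisely, there exist x, y ∈ ℤ_β with x + y ∈ fin(β) but x + y ∉ ℤ_β. -/

import Mathlib

open Polynomial

/-- The β-transformation `T_β(x) = βx - ⌊βx⌋`. -/
noncomputable def betaT (β : ℝ) : ℝ → ℝ := fun x => β * x - ⌊β * x⌋

/-- `fin(β)`: reals `x` such that `|x|/β^N ∈ [0,1)` and the greedy expansion of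
`|x|/β^N` is finite, for some `N, n ∈ ℕ`. -/
def finBeta (β : ℝ) : Set ℝ :=
  {x | ∃ N n : ℕ, |x| / β ^ N ∈ Set.Ico (0 : ℝ) 1 ∧ (betaT β)^[n] (|x| / β ^ N) = 0}

/-- `ℤ_β`: the set of β-integers. -/
def betaInt (β : ℝ) : Set ℝ :=
  {x | ∃ N : ℕ, |x| / β ^ N ∈ Set.Ico (0 : ℝ) 1 ∧ (betaT β)^[N] (|x| / β ^ N) = 0}

/-- `L_⊕(β)`: the least `L ∈ ℕ` such that `β^L·(x+y) ∈ ℤ_β` for all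
`x, y ∈ ℤ_β` with `x + y ∈ fin(β)`. -/
noncomputable def Lplus (β : ℝ) : ℕ :=
  sInf {L : ℕ | ∀ x ∈ betaInt β, ∀ y ∈ betaInt β,
    x + y ∈ finBeta β → β ^ L * (x + y) ∈ betaInt β}

/-- `L_⊗(β)`: the least `L ∈ ℕ` such that `β^L·(x·y) ∈ ℤ_β` for all
`x, y ∈ ℤ_β` with `x·y ∈ fin(β)`. -/
noncomputable def Lmul (β : ℝ) : ℕ :=
  sInf {L : ℕ | ∀ x ∈ betaInt β, ∀ y ∈ betaInt β,
    x * y ∈ finBeta β → β ^ L * (x * y) ∈ betaInt β}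

/-!
The conjugate `β' ∈ (0, 1)` keeps the fractional parts of sums of β-integers uniformly short.
A β-integer is `Q(β)` for an integer polynomial `Q` with coefficients in `[0, β]` up to sign, so
`|Q(β')| ≤ β / (1 - β')`. If `w = |x + y| / β ^ N` has a finite expansion ending at digit `N + M`,
its digits form an integer polynomial `D` with `D(β) = β ^ M |x + y|` and constant term at least
`1`; writing `|x + y| = Q(β)`, the polynomial `D - X ^ M Q` vanishes at `β`, hence at `β'`, and
`1 ≤ D(β') = β' ^ M Q(β') ≤ β' ^ M · 2β / (1 - β')`. This bounds `M`, so some `L` works, which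
matters because `Lplus` is an `sInf` and would be `0` if no `L` worked. On the other hand
`(a - 1) β³ + (β³ + b) = β⁴ + (b - 1) β² + (a - 1) β + 1 / β`, so `L = 0` fails.
-/

open Set

section BetaTransformation

variable {β : ℝ}

lemma betaT_eq_fract (x : ℝ) : betaT β x = Int.fract (β * x) := rfl

lemma betaT_mem_Ico (x : ℝ) : betaT β x ∈ Ico (0 : ℝ) 1 :=
  ⟨Int.fract_nonneg _, Int.fract_lt_one _⟩

lemma iterate_betaT_mem_Ico {w : ℝ} (hw : w ∈ Ico (0 : ℝ) 1) :
    ∀ k, (betaT β)^[k] w ∈ Ico (0 : ℝ) 1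
  | 0 => hw
  | k + 1 => by rw [Function.iterate_succ_apply']; exact betaT_mem_Ico _

lemma iterate_betaT_zero (k : ℕ) : (betaT β)^[k] 0 = 0 :=
  Function.iterate_fixed (by simp [betaT]) k

lemma betaT_eq_of_mul_eq {u v : ℝ} (m : ℤ) (h : β * u = m + v) (hv : v ∈ Ico (0 : ℝ) 1) :
    betaT β u = v := by
  rw [betaT_eq_fract, h, Int.fract_intCast_add, Int.fract_eq_self.2 hv]

/-- The first `j` digits of `z / β ^ (N + j)` are zero. -/
lemma iterate_betaT_div_pow_add (hβ : 1 ≤ β) {z : ℝ} {N : ℕ} (hz : 0 ≤ z) (hzN : z < β ^ N)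
    (j : ℕ) : (betaT β)^[N + j] (z / β ^ (N + j)) = (betaT β)^[N] (z / β ^ N) := by
  have hβ0 : 0 < β := by linarith
  suffices h : (betaT β)^[j] (z / β ^ (N + j)) = z / β ^ N by
    rw [Function.iterate_add_apply, h]
  induction j with
  | zero => rfl
  | succ j ih =>
    rw [Function.iterate_succ_apply, ← ih]
    congr 1
    refine betaT_eq_of_mul_eq 0 (by rw [← add_assoc, pow_succ]; field_simp; simp)
      ⟨by positivity, ?_⟩
    rw [div_lt_one (by positivity)]
    exact hzN.trans_le (pow_le_pow_right₀ hβ (Nat.le_add_right N j))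

lemma mem_betaInt_iff (hβ : 1 ≤ β) {z : ℝ} {k : ℕ} (hz : 0 ≤ z) (hzk : z < β ^ k) :
    z ∈ betaInt β ↔ (betaT β)^[k] (z / β ^ k) = 0 := by
  have hβ0 : 0 < β := by linarith
  refine ⟨fun ⟨N, hN, hT⟩ ↦ ?_, fun hT ↦ ⟨k, ?_, ?_⟩⟩
  · rw [abs_of_nonneg hz] at hN hT
    have hzN : z < β ^ N := (div_lt_one (by positivity)).1 hN.2
    rcases le_total N k with hNk | hkN
    · obtain ⟨j, rfl⟩ := Nat.exists_eq_add_of_le hNk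
      rwa [iterate_betaT_div_pow_add hβ hz hzN]
    · obtain ⟨j, rfl⟩ := Nat.exists_eq_add_of_le hkN
      rwa [iterate_betaT_div_pow_add hβ hz hzk] at hT
  · rw [abs_of_nonneg hz]
    exact ⟨by positivity, (div_lt_one (by positivity)).2 hzk⟩
  · rwa [abs_of_nonneg hz]

lemma zero_mem_betaInt : (0 : ℝ) ∈ betaInt β := ⟨0, by simp, by simp⟩

lemma intCast_mul_pow_add_mem_betaInt (hβ : 1 ≤ β) {d : ℤ} (hd : 0 ≤ d) {x : ℝ} {k : ℕ}
    (hx : x ∈ betaInt β) (hx0 : 0 ≤ x) (hxk : x < β ^ k) (hlt : d * β ^ k + x < β ^ (k + 1)) :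
    d * β ^ k + x ∈ betaInt β := by
  have hβ0 : 0 < β := by linarith
  have hd' : (0 : ℝ) ≤ d := by exact_mod_cast hd
  rw [mem_betaInt_iff hβ hx0 hxk] at hx
  rw [mem_betaInt_iff hβ (by positivity) hlt, Function.iterate_succ_apply]
  convert hx using 2
  refine betaT_eq_of_mul_eq d (by field_simp; ring)
    ⟨by positivity, (div_lt_one (by positivity)).2 hxk⟩

end BetaTransformation

section DigitPolynomial

variable {β : ℝ}

/-- The first `k` greedy digits of `w` in Horner form: the digit produced by the `i`-th step of
`betaT β` is the coefficient of `X ^ (k - 1 - i)`. -/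
noncomputable def digitPoly (β w : ℝ) : ℕ → ℤ[X]
  | 0 => 0
  | k + 1 => X * digitPoly β w k + C ⌊β * (betaT β)^[k] w⌋

lemma aeval_digitPoly_succ (w s : ℝ) (k : ℕ) :
    aeval s (digitPoly β w (k + 1)) = s * aeval s (digitPoly β w k) + ⌊β * (betaT β)^[k] w⌋ := by
  simp [digitPoly]

lemma pow_mul_eq_aeval_digitPoly_add (w : ℝ) (k : ℕ) :
    β ^ k * w = aeval β (digitPoly β w k) + (betaT β)^[k] w := by
  induction k with
  | zero => simp [digitPoly]
  | succ k ih =>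
    rw [aeval_digitPoly_succ, Function.iterate_succ_apply', betaT, pow_succ', mul_assoc, ih]
    ring

lemma digit_mem_Icc (hβ : 0 ≤ β) {w : ℝ} (hw : w ∈ Ico (0 : ℝ) 1) (k : ℕ) :
    (⌊β * (betaT β)^[k] w⌋ : ℝ) ∈ Icc 0 β := by
  obtain ⟨hu0, hu1⟩ := iterate_betaT_mem_Ico hw k
  refine ⟨by exact_mod_cast Int.floor_nonneg.2 (mul_nonneg hβ hu0), ?_⟩
  calc (⌊β * (betaT β)^[k] w⌋ : ℝ) ≤ β * (betaT β)^[k] w := Int.floor_le _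
    _ ≤ β := mul_le_of_le_one_right hβ hu1.le

lemma aeval_digitPoly_nonneg (hβ : 0 ≤ β) {w : ℝ} (hw : w ∈ Ico (0 : ℝ) 1) {s : ℝ}
    (hs : 0 ≤ s) (k : ℕ) : 0 ≤ aeval s (digitPoly β w k) := by
  induction k with
  | zero => simp [digitPoly]
  | succ k ih =>
    rw [aeval_digitPoly_succ]
    have := (digit_mem_Icc hβ hw k).1
    positivity

lemma aeval_digitPoly_le (hβ : 0 ≤ β) {w : ℝ} (hw : w ∈ Ico (0 : ℝ) 1) {s : ℝ}
    (hs0 : 0 ≤ s) (hs1 : s < 1) (k : ℕ) : aeval s (digitPoly β w k) ≤ β / (1 - s) := by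
  induction k with
  | zero => simpa [digitPoly] using div_nonneg hβ (by linarith : 0 ≤ 1 - s)
  | succ k ih =>
    rw [aeval_digitPoly_succ]
    calc s * aeval s (digitPoly β w k) + ⌊β * (betaT β)^[k] w⌋
        ≤ s * (β / (1 - s)) + β := by
          gcongr
          exact (digit_mem_Icc hβ hw k).2
      _ = β / (1 - s) := by field_simp [(by linarith : 1 - s ≠ 0)]; ring

/-- The constant coefficient is the last digit, which equals `β * (betaT β)^[m] w > 0`. -/
lemma one_le_aeval_digitPoly (hβ : 0 < β) {w : ℝ} (hw : w ∈ Ico (0 : ℝ) 1) {s : ℝ} (hs : 0 ≤ s)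
    {m : ℕ} (hm : (betaT β)^[m] w ≠ 0) (hm1 : (betaT β)^[m + 1] w = 0) :
    1 ≤ aeval s (digitPoly β w (m + 1)) := by
  set u := (betaT β)^[m] w
  have hu : 0 < u := lt_of_le_of_ne (iterate_betaT_mem_Ico hw m).1 (Ne.symm hm)
  have hfloor : (⌊β * u⌋ : ℝ) = β * u := by
    rw [Function.iterate_succ_apply', betaT] at hm1
    linarith
  have hdigit : (1 : ℝ) ≤ ⌊β * u⌋ := by
    have : (0 : ℝ) < ⌊β * u⌋ := by rw [hfloor]; exact mul_pos hβ hu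
    exact_mod_cast (Int.cast_pos.1 this : 0 < ⌊β * u⌋)
  rw [aeval_digitPoly_succ]
  linarith [mul_nonneg hs (aeval_digitPoly_nonneg hβ.le hw hs m)]

end DigitPolynomial

lemma IsConjRoot.aeval_intPoly_eq_zero {β t : ℝ} (h : IsConjRoot ℚ β t) {p : ℤ[X]}
    (hp : aeval β p = 0) : aeval t p = 0 := by
  rw [← aeval_map_algebraMap ℚ] at hp ⊢
  obtain ⟨q, hq⟩ := minpoly.dvd ℚ β hp
  rw [hq, map_mul, h.aeval_eq_zero, zero_mul]

section ConjugateBound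

variable {β t : ℝ}

lemma exists_aeval_eq_of_abs_eq {K z z' : ℝ} {p : ℤ[X]} (hpβ : aeval β p = z)
    (hpt : |aeval t p| ≤ K) (hz : |z'| = |z|) :
    ∃ q : ℤ[X], aeval β q = z' ∧ |aeval t q| ≤ K := by
  rcases abs_eq_abs.1 hz with h | h
  · exact ⟨p, hpβ ▸ h.symm, hpt⟩
  · exact ⟨-p, by rw [map_neg, hpβ, h], by rwa [map_neg, abs_neg]⟩

lemma exists_aeval_eq_of_mem_betaInt (hβ : 0 < β) (ht0 : 0 ≤ t) (ht1 : t < 1) {x : ℝ}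
    (hx : x ∈ betaInt β) : ∃ p : ℤ[X], aeval β p = x ∧ |aeval t p| ≤ β / (1 - t) := by
  obtain ⟨N, hw, hT⟩ := hx
  have hP := pow_mul_eq_aeval_digitPoly_add (β := β) (|x| / β ^ N) N
  rw [hT, add_zero, mul_div_cancel₀ _ (by positivity)] at hP
  refine exists_aeval_eq_of_abs_eq hP.symm ?_ (abs_abs x).symm
  rw [abs_of_nonneg (aeval_digitPoly_nonneg hβ.le hw ht0 N)]
  exact aeval_digitPoly_le hβ.le hw ht0 ht1 N

lemma one_le_pow_mul_abs_aeval (hβ : 0 < β) (ht : 0 ≤ t) (hconj : IsConjRoot ℚ β t) {w : ℝ}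
    (hw : w ∈ Ico (0 : ℝ) 1) {m M : ℕ} (hm : (betaT β)^[m] w ≠ 0)
    (hm1 : (betaT β)^[m + 1] w = 0) {q : ℤ[X]} (hq : β ^ (m + 1) * w = β ^ M * aeval β q) :
    1 ≤ t ^ M * |aeval t q| := by
  set P := digitPoly β w (m + 1)
  have hPβ : aeval β P = β ^ M * aeval β q := by
    rw [← hq, pow_mul_eq_aeval_digitPoly_add, hm1, add_zero]
  have hPt : aeval t P = t ^ M * aeval t q := by
    have := hconj.aeval_intPoly_eq_zero (p := P - X ^ M * q) (by simp [hPβ])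
    simpa [sub_eq_zero] using this
  calc 1 ≤ aeval t P := one_le_aeval_digitPoly hβ hw ht hm hm1
    _ = t ^ M * aeval t q := hPt
    _ ≤ t ^ M * |aeval t q| := mul_le_mul_of_nonneg_left (le_abs_self _) (by positivity)

lemma pow_mul_mem_betaInt_of_iterate_eq_zero (hβ : 0 < β) {z : ℝ} {N n L : ℕ}
    (hw : |z| / β ^ N ∈ Ico (0 : ℝ) 1) (hn : (betaT β)^[n] (|z| / β ^ N) = 0)
    (hnL : n ≤ N + L) : β ^ L * z ∈ betaInt β := by
  have hdiv : |β ^ L * z| / β ^ (N + L) = |z| / β ^ N := by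
    rw [abs_mul, abs_of_pos (by positivity), pow_add]
    field_simp
  obtain ⟨j, hj⟩ := Nat.exists_eq_add_of_le hnL
  refine ⟨N + L, hdiv ▸ hw, ?_⟩
  rw [hdiv, hj, add_comm, Function.iterate_add_apply, hn, iterate_betaT_zero]

/-- Any `L` with `t ^ L * (2 * β / (1 - t)) < 1` works. -/
theorem exists_pow_mul_add_mem_betaInt (hβ : 0 < β) (ht0 : 0 ≤ t) (ht1 : t < 1)
    (hconj : IsConjRoot ℚ β t) : ∃ L : ℕ, ∀ x ∈ betaInt β, ∀ y ∈ betaInt β,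
      x + y ∈ finBeta β → β ^ L * (x + y) ∈ betaInt β := by
  classical
  set K := 2 * (β / (1 - t))
  have hK : 0 < K := mul_pos two_pos (div_pos hβ (sub_pos.2 ht1))
  obtain ⟨L, hL⟩ := exists_pow_lt_of_lt_one (inv_pos.2 hK) ht1
  refine ⟨L, fun x hx y hy ⟨N, n, hw, hn⟩ ↦ ?_⟩
  have hex : ∃ n, (betaT β)^[n] (|x + y| / β ^ N) = 0 := ⟨n, hn⟩
  by_contra hnot
  have hlt : N + L < Nat.find hex := by
    by_contra hle
    exact hnot (pow_mul_mem_betaInt_of_iterate_eq_zero hβ hw (Nat.find_spec hex) (by omega))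
  obtain ⟨m, hm⟩ : ∃ m, Nat.find hex = m + 1 := Nat.exists_eq_succ_of_ne_zero (by omega)
  obtain ⟨M, hM⟩ : ∃ M, m + 1 = N + M := Nat.exists_eq_add_of_le (by omega)
  obtain ⟨p, hpβ, hpt⟩ := exists_aeval_eq_of_mem_betaInt hβ ht0 ht1 hx
  obtain ⟨p', hp'β, hp't⟩ := exists_aeval_eq_of_mem_betaInt hβ ht0 ht1 hy
  obtain ⟨q, hqβ, hqt⟩ := exists_aeval_eq_of_abs_eq (p := p + p') (z := x + y) (K := K)
    (by rw [map_add, hpβ, hp'β])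
    (by rw [map_add]; exact (abs_add_le _ _).trans (by linarith)) (abs_abs _)
  have hone := one_le_pow_mul_abs_aeval hβ ht0 hconj hw (M := M) (q := q)
    (Nat.find_min hex (by omega)) (hm ▸ Nat.find_spec hex)
    (by rw [hqβ, hM, pow_add]; field_simp)
  have hML : t ^ M * |aeval t q| ≤ t ^ L * K :=
    mul_le_mul (pow_le_pow_of_le_one ht0 ht1.le (by omega)) hqt (abs_nonneg _) (by positivity)
  have hLK : t ^ L * K < 1 := by simpa [hK.ne'] using mul_lt_mul_of_pos_right hL hK
  linarith

end ConjugateBound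

lemma one_le_Lplus {β : ℝ} (hL : ∃ L : ℕ, ∀ x ∈ betaInt β, ∀ y ∈ betaInt β,
      x + y ∈ finBeta β → β ^ L * (x + y) ∈ betaInt β)
    (hxy : ∃ x ∈ betaInt β, ∃ y ∈ betaInt β, x + y ∈ finBeta β ∧ x + y ∉ betaInt β) :
    1 ≤ Lplus β := by
  obtain ⟨x, hx, y, hy, hfin, hnot⟩ := hxy
  refine Nat.one_le_iff_ne_zero.2 fun h ↦ ?_
  rcases Nat.sInf_eq_zero.1 h with h0 | hempty
  · exact hnot (by simpa using h0 x hx y hy hfin)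
  · exact eq_empty_iff_forall_notMem.1 hempty _ hL.choose_spec

lemma monic_cubic (a b : ℤ) : (X ^ 3 - C a * X ^ 2 + C b * X - 1 : ℤ[X]).Monic := by
  monicity!

section Cubic

variable {a b : ℤ}

/-- By the rational root theorem the only possible rational roots are `±1`. -/
lemma irreducible_map_cubic (hab : b ≠ a) (hab' : a + b ≠ -2) :
    Irreducible ((X ^ 3 - C a * X ^ 2 + C b * X - 1 : ℤ[X]).map (algebraMap ℤ ℚ)) := by
  set p : ℤ[X] := X ^ 3 - C a * X ^ 2 + C b * X - 1
  have hdeg : (p.map (algebraMap ℤ ℚ)).natDegree = 3 := by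
    rw [(monic_cubic a b).natDegree_map]; compute_degree!
  rw [irreducible_iff_roots_eq_zero_of_degree_le_three (by omega) (by omega)]
  refine Multiset.eq_zero_of_forall_notMem fun r hr ↦ ?_
  rw [mem_roots ((monic_cubic a b).map _).ne_zero, IsRoot, eval_map_algebraMap] at hr
  obtain ⟨r', rfl, hr'⟩ := exists_integer_of_is_root_of_monic (monic_cubic a b) hr
  have hcoeff : p.coeff 0 = -1 := by simp [p]
  have hval : r' ^ 3 - a * r' ^ 2 + b * r' - 1 = 0 := by
    have : ((r' ^ 3 - a * r' ^ 2 + b * r' - 1 : ℤ) : ℚ) = 0 := by push_cast; simpa [p] using hr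
    exact_mod_cast this
  rw [hcoeff, dvd_neg] at hr'
  rcases Int.isUnit_iff.1 (isUnit_of_dvd_one hr') with rfl | rfl
  · exact hab (by linarith)
  · exact hab' (by linarith)

lemma isConjRoot_of_cubic (hab : b ≠ a) (hab' : a + b ≠ -2) {β t : ℝ}
    (hβ : β ^ 3 - a * β ^ 2 + b * β - 1 = 0) (ht : t ^ 3 - a * t ^ 2 + b * t - 1 = 0) :
    IsConjRoot ℚ β t := by
  have hmin : ∀ s : ℝ, s ^ 3 - a * s ^ 2 + b * s - 1 = 0 →
      minpoly ℚ s = (X ^ 3 - C a * X ^ 2 + C b * X - 1 : ℤ[X]).map (algebraMap ℤ ℚ) :=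
    fun s hs ↦ (minpoly.eq_of_irreducible_of_monic (irreducible_map_cubic hab hab')
      (by simpa [aeval_map_algebraMap] using hs) ((monic_cubic a b).map _)).symm
  exact (hmin β hβ).trans (hmin t ht).symm

/-- `P(a - 1) = (a - 1)(b - a + 1) - 1 < 0` while the factors at `β'` and `β''` are positive. -/
lemma sub_one_lt_of_roots (hb : 2 ≤ b) (hba : b < a) {β β' β'' : ℝ} (hβ' : β' < 1)
    (hβ'' : β'' < 1) (hroots : ∀ x : ℝ, x ^ 3 - (a : ℝ) * x ^ 2 + (b : ℝ) * x - 1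
      = (x - β) * (x - β') * (x - β'')) :
    (a : ℝ) - 1 < β := by
  have hA : (3 : ℝ) ≤ a := by exact_mod_cast (by omega : (3 : ℤ) ≤ a)
  have hBA : (b : ℝ) - a + 1 ≤ 0 := by
    have : (b : ℝ) + 1 ≤ a := by exact_mod_cast (by omega : b + 1 ≤ a)
    linarith
  by_contra! hle
  have h := hroots (a - 1)
  have hfactors : 0 ≤ (a - 1 - β) * (a - 1 - β') * (a - 1 - β'') :=
    mul_nonneg (mul_nonneg (by linarith) (by linarith)) (by linarith)
  nlinarith [mul_nonpos_of_nonneg_of_nonpos (by linarith : (0 : ℝ) ≤ a - 1) hBA]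

/-- The greedy expansion of `(a β³ + b) / β⁵` has digits `1, 0, b - 1, a - 1, 0, 1`. -/
lemma iterate_betaT_five (hb : 1 ≤ (b : ℝ)) {β : ℝ} (hbβ : (b : ℝ) < β)
    (hcube : β ^ 3 - a * β ^ 2 + b * β - 1 = 0) :
    (betaT β)^[5] ((a * β ^ 3 + b) / β ^ 5) = 1 / β := by
  have hβ : 1 < β := by linarith
  have hβ0 : 0 < β := by linarith
  have hnum : 0 ≤ b * β ^ 2 - β + b := by nlinarith
  have hnum' : b * β ^ 2 - β + b < β ^ 3 := by nlinarith
  have e1 : betaT β ((a * β ^ 3 + b) / β ^ 5) = (b * β ^ 2 - β + b) / β ^ 4 :=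
    betaT_eq_of_mul_eq 1 (by field_simp; linear_combination (-β) * hcube)
      ⟨by positivity, (div_lt_one (by positivity)).2 (by nlinarith)⟩
  have e2 : betaT β ((b * β ^ 2 - β + b) / β ^ 4) = (b * β ^ 2 - β + b) / β ^ 3 :=
    betaT_eq_of_mul_eq 0 (by field_simp; ring)
      ⟨by positivity, (div_lt_one (by positivity)).2 hnum'⟩
  have e3 : betaT β ((b * β ^ 2 - β + b) / β ^ 3) = (β ^ 2 - β + b) / β ^ 2 :=
    betaT_eq_of_mul_eq (b - 1) (by push_cast; field_simp; ring)
      ⟨div_nonneg (by nlinarith) (by positivity), (div_lt_one (by positivity)).2 (by linarith)⟩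
  have e4 : betaT β ((β ^ 2 - β + b) / β ^ 2) = 1 / β ^ 2 :=
    betaT_eq_of_mul_eq (a - 1) (by push_cast; field_simp; linear_combination hcube)
      ⟨by positivity, (div_lt_one (by positivity)).2 (by nlinarith)⟩
  have e5 : betaT β (1 / β ^ 2) = 1 / β :=
    betaT_eq_of_mul_eq 0 (by field_simp; ring)
      ⟨by positivity, (div_lt_one hβ0).2 hβ⟩
  simp only [Function.iterate_succ_apply, Function.iterate_zero_apply]
  rw [e1, e2, e3, e4, e5]

lemma exists_betaInt_add_mem_finBeta_not_mem_betaInt (hb : 2 ≤ b) (hba : b < a)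
    {β : ℝ} (hβ : (a : ℝ) - 1 < β) (hcube : β ^ 3 - a * β ^ 2 + b * β - 1 = 0) :
    ∃ x ∈ betaInt β, ∃ y ∈ betaInt β, x + y ∈ finBeta β ∧ x + y ∉ betaInt β := by
  have hB : (2 : ℝ) ≤ b := by exact_mod_cast hb
  have hbβ : (b : ℝ) < β := by
    have : (b : ℝ) + 1 ≤ a := by exact_mod_cast (by omega : b + 1 ≤ a)
    linarith
  have hβ1 : 1 ≤ β := by linarith
  have hβ0 : 0 < β := by linarith
  have hb_mem : (b : ℝ) ∈ betaInt β := by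
    simpa using intCast_mul_pow_add_mem_betaInt (k := 0) hβ1 (d := b) (by omega)
      zero_mem_betaInt le_rfl (by simp) (by simpa using hbβ)
  have hx : ((a - 1 : ℤ) : ℝ) * β ^ 3 + 0 ∈ betaInt β :=
    intCast_mul_pow_add_mem_betaInt hβ1 (by omega) zero_mem_betaInt le_rfl (by positivity)
      (by push_cast; nlinarith [pow_pos hβ0 3])
  have hy : ((1 : ℤ) : ℝ) * β ^ 3 + b ∈ betaInt β :=
    intCast_mul_pow_add_mem_betaInt hβ1 zero_le_one hb_mem (by positivity) (by nlinarith)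
      (by push_cast; nlinarith [pow_pos hβ0 3])
  have hsum : ((a - 1 : ℤ) : ℝ) * β ^ 3 + 0 + ((1 : ℤ) * β ^ 3 + b) = a * β ^ 3 + b := by
    push_cast; ring
  have hz0 : 0 < (a : ℝ) * β ^ 3 + b := by
    have : (0 : ℝ) < a := by exact_mod_cast (by omega : (0 : ℤ) < a)
    positivity
  have hz5 : (a : ℝ) * β ^ 3 + b < β ^ 5 := by nlinarith [pow_pos hβ0 3]
  have hT5 := iterate_betaT_five (by linarith) hbβ hcube
  refine ⟨_, hx, _, hy, ?_, ?_⟩ <;> rw [hsum]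
  · refine ⟨5, 6, ?_, ?_⟩ <;> rw [abs_of_pos hz0]
    · exact ⟨by positivity, (div_lt_one (by positivity)).2 hz5⟩
    · rw [Function.iterate_succ_apply', hT5]
      exact betaT_eq_of_mul_eq 1 (by field_simp; simp) ⟨le_rfl, one_pos⟩
  · rw [mem_betaInt_iff hβ1 hz0.le hz5, hT5]
    exact one_div_ne_zero hβ0.ne'

end Cubic

theorem stmt3 (a b : ℤ) (hb : 2 ≤ b) (hba : b < a) (β β' β'' : ℝ)
    (hβ : 1 < β) (hβ' : β' ∈ Set.Ioo (0 : ℝ) 1) (hβ'' : β'' ∈ Set.Ioo (0 : ℝ) 1)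
    (hroots : ∀ x : ℝ, x ^ 3 - (a : ℝ) * x ^ 2 + (b : ℝ) * x - 1
      = (x - β) * (x - β') * (x - β'')) :
    1 ≤ Lplus β ∧
    ∃ x ∈ betaInt β, ∃ y ∈ betaInt β, x + y ∈ finBeta β ∧ x + y ∉ betaInt β := by
  have hβroot : β ^ 3 - a * β ^ 2 + b * β - 1 = 0 := by simp [hroots]
  have hβ'root : β' ^ 3 - a * β' ^ 2 + b * β' - 1 = 0 := by simp [hroots]
  have hlt : (a : ℝ) - 1 < β := sub_one_lt_of_roots hb hba hβ'.2 hβ''.2 hroots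
  have hconj : IsConjRoot ℚ β β' := isConjRoot_of_cubic (by omega) (by omega) hβroot hβ'root
  have hxy := exists_betaInt_add_mem_finBeta_not_mem_betaInt hb hba hlt hβroot
  have hL := exists_pow_mul_add_mem_betaInt (by linarith) hβ'.1.le hβ'.2 hconj
  exact ⟨one_le_Lplus hL hxy, hxy⟩
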